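/- arXiv:0708.3358 — 4 statements merged into one kernel-verified Lean document; each statement's English description precedes it below -/
import Mathlib

section
/- Let n ≥ 1 and let N be a minimal norm on the algebra M_n of n×n complex matrices (i.e., every norm ‖·‖ on M_n with ‖A‖ ≤ N(A) for all A satisfies ‖A‖ = N(A) for all A). Then there exist norms ‖·‖₁ and ‖·‖₂ on ℂⁿ such that N(A) = max{‖Ax‖₂ : x ∈ ℂⁿ, ‖x‖₁ = 1} for every A ∈ M_n. -/
open Matrix

/-- `ν` is a norm on `ℂⁿ`. -/
def IsNormCn {n : ℕ} (ν : (Fin n → ℂ) → ℝ) : Prop :=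
  (∀ x, ν x = 0 ↔ x = 0) ∧
  (∀ (c : ℂ) (x), ν (c • x) = ‖c‖ * ν x) ∧
  (∀ x y, ν (x + y) ≤ ν x + ν y)

/-- `N` is a norm on the n×n complex matrices. -/
def IsNormMn {n : ℕ} (N : Matrix (Fin n) (Fin n) ℂ → ℝ) : Prop :=
  (∀ A, N A = 0 ↔ A = 0) ∧
  (∀ (c : ℂ) (A), N (c • A) = ‖c‖ * N A) ∧
  (∀ A B, N (A + B) ≤ N A + N B)

/-- `N` is a minimal norm on `M_n`: any norm dominated by `N` equals `N`. -/
def IsMinimalNorm {n : ℕ} (N : Matrix (Fin n) (Fin n) ℂ → ℝ) : Prop :=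
  ∀ N' : Matrix (Fin n) (Fin n) ℂ → ℝ,
    IsNormMn N' → (∀ A, N' A ≤ N A) → ∀ A, N' A = N A

/-- The generalized induced norm `‖A‖_{1,2} = max{‖Ax‖₂ : ‖x‖₁ = 1}`. -/
noncomputable def gind {n : ℕ} (ν₁ ν₂ : (Fin n → ℂ) → ℝ)
    (A : Matrix (Fin n) (Fin n) ℂ) : ℝ :=
  sSup {r : ℝ | ∃ x : Fin n → ℂ, ν₁ x = 1 ∧ r = ν₂ (A.mulVec x)}

/-- `C_x`: the matrix all of whose columns equal `x`, i.e. `y ↦ (∑ j, y j) • x`. -/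
def Cmat {n : ℕ} (x : Fin n → ℂ) : Matrix (Fin n) (Fin n) ℂ :=
  Matrix.of fun i _ => x i

/- ### Auxiliary lemmas -/

lemma isNormMn_nonneg {n : ℕ} {N : Matrix (Fin n) (Fin n) ℂ → ℝ} (hN : IsNormMn N)
    (A : Matrix (Fin n) (Fin n) ℂ) : 0 ≤ N A := by
  obtain ⟨h0, hs, ht⟩ := hN
  have h1 : N (-A) = N A := by simpa using hs (-1) A
  have h2 : (0:ℝ) ≤ N A + N (-A) := by
    have := ht A (-A)
    simpa [(h0 0).mpr rfl] using this
  linarith [h1 ▸ h2]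

lemma isNormCn_nonneg {n : ℕ} {ν : (Fin n → ℂ) → ℝ} (hν : IsNormCn ν)
    (x : Fin n → ℂ) : 0 ≤ ν x := by
  obtain ⟨h0, hs, ht⟩ := hν
  have h1 : ν (-x) = ν x := by simpa using hs (-1) x
  have h2 : (0:ℝ) ≤ ν x + ν (-x) := by
    have := ht x (-x)
    simpa [(h0 0).mpr rfl] using this
  linarith [h1 ▸ h2]

lemma isNormCn_sum_le {n : ℕ} {ν : (Fin n → ℂ) → ℝ} (hν : IsNormCn ν)
    {ι : Type*} (s : Finset ι) (f : ι → (Fin n → ℂ)) :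
    ν (∑ i ∈ s, f i) ≤ ∑ i ∈ s, ν (f i) := by
  classical
  induction s using Finset.cons_induction with
  | empty => simp [(hν.1 0).mpr rfl]
  | cons a s ha ih =>
    rw [Finset.sum_cons, Finset.sum_cons]
    exact (hν.2.2 _ _).trans (by linarith)

lemma isNormCn_expand {n : ℕ} {ν : (Fin n → ℂ) → ℝ} (hν : IsNormCn ν)
    (v : Fin n → ℂ) : ν v ≤ ∑ i, ‖v i‖ * ν (Pi.single i 1) := by
  have hv : v = ∑ i, v i • (Pi.single i 1 : Fin n → ℂ) := by
    funext k
    simp [Finset.sum_apply, Pi.single_apply]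
  calc ν v = ν (∑ i, v i • (Pi.single i 1 : Fin n → ℂ)) := by rw [← hv]
    _ ≤ ∑ i, ν (v i • (Pi.single i 1 : Fin n → ℂ)) := isNormCn_sum_le hν _ _
    _ = ∑ i, ‖v i‖ * ν (Pi.single i 1) := by
        refine Finset.sum_congr rfl fun i _ => hν.2.1 _ _

/-- Type synonym for `M_n` carrying the norm `N`. -/
def MXsyn (n : ℕ) (_N : Matrix (Fin n) (Fin n) ℂ → ℝ) : Type :=
  Matrix (Fin n) (Fin n) ℂ

lemma entry_bound {n : ℕ} (N : Matrix (Fin n) (Fin n) ℂ → ℝ) (hN : IsNormMn N) :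
    ∃ C : ℝ, 0 ≤ C ∧ ∀ (A : Matrix (Fin n) (Fin n) ℂ) (i j : Fin n), ‖A i j‖ ≤ C * N A := by
  obtain ⟨h0, hs, ht⟩ := hN
  letI : AddCommGroup (MXsyn n N) := inferInstanceAs (AddCommGroup (Matrix (Fin n) (Fin n) ℂ))
  letI : Module ℂ (MXsyn n N) := inferInstanceAs (Module ℂ (Matrix (Fin n) (Fin n) ℂ))
  letI : Norm (MXsyn n N) := ⟨N⟩
  have core : NormedSpace.Core ℂ (MXsyn n N) :=
    { norm_nonneg := fun A => isNormMn_nonneg ⟨h0, hs, ht⟩ A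
      norm_smul := fun c A => hs c A
      norm_triangle := fun A B => ht A B
      norm_eq_zero_iff := fun A => h0 A }
  letI : NormedAddCommGroup (MXsyn n N) := NormedAddCommGroup.ofCore core
  letI : NormedSpace ℂ (MXsyn n N) := NormedSpace.ofCore core
  letI : FiniteDimensional ℂ (MXsyn n N) :=
    inferInstanceAs (FiniteDimensional ℂ (Matrix (Fin n) (Fin n) ℂ))
  set f : Fin n → Fin n → (MXsyn n N →L[ℂ] ℂ) := fun i j =>
    LinearMap.toContinuousLinearMap
      { toFun := fun (A : MXsyn n N) => (A : Matrix (Fin n) (Fin n) ℂ) i j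
        map_add' := fun _ _ => rfl
        map_smul' := fun _ _ => rfl } with hf
  refine ⟨∑ i, ∑ j, ‖f i j‖, ?_, ?_⟩
  · positivity
  · intro A i j
    have h1 : ‖A i j‖ = ‖f i j A‖ := rfl
    have h2 : ‖f i j A‖ ≤ ‖f i j‖ * N A := (f i j).le_opNorm A
    refine h1 ▸ h2.trans ?_
    have hNA : 0 ≤ N A := isNormMn_nonneg ⟨h0, hs, ht⟩ A
    gcongr
    calc ‖f i j‖ ≤ ∑ j', ‖f i j'‖ :=
          Finset.single_le_sum (fun _ _ => norm_nonneg _) (Finset.mem_univ j)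
      _ ≤ ∑ i', ∑ j', ‖f i' j'‖ :=
          Finset.single_le_sum (fun i' _ => Finset.sum_nonneg fun _ _ => norm_nonneg _)
            (Finset.mem_univ i)

theorem minimal_norm_is_gind (n : ℕ) (hn : 1 ≤ n)
    (N : Matrix (Fin n) (Fin n) ℂ → ℝ) (hN : IsNormMn N) (hmin : IsMinimalNorm N) :
    ∃ ν₁ ν₂ : (Fin n → ℂ) → ℝ, IsNormCn ν₁ ∧ IsNormCn ν₂ ∧
      ∀ A : Matrix (Fin n) (Fin n) ℂ, N A = gind ν₁ ν₂ A := by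
  classical
  obtain ⟨C, hC0, hC⟩ := entry_bound N hN
  have hNnn : ∀ A, 0 ≤ N A := isNormMn_nonneg hN
  obtain ⟨h0, hs, ht⟩ := hN
  have hN0 : N (0 : Matrix (Fin n) (Fin n) ℂ) = 0 := (h0 0).mpr rfl
  set i₀ : Fin n := ⟨0, hn⟩ with hi₀
  -- the norm ν₂
  set ν₂ : (Fin n → ℂ) → ℝ := fun x => N (Cmat x) with hν₂def
  have hCmat_zero : ∀ x : Fin n → ℂ, Cmat x = 0 ↔ x = 0 := by
    intro x
    constructor
    · intro h; funext i
      have := congrFun (congrFun h i) i₀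
      simpa [Cmat] using this
    · rintro rfl; ext i j; simp [Cmat]
  have hν₂ : IsNormCn ν₂ := by
    refine ⟨fun x => ?_, fun c x => ?_, fun x y => ?_⟩
    · rw [hν₂def]; exact (h0 _).trans (hCmat_zero x)
    · have hc : Cmat (c • x) = c • Cmat x := by ext i j; simp [Cmat]
      rw [hν₂def]; simp only [hc, hs]
    · have hc : Cmat (x + y) = Cmat x + Cmat y := by ext i j; simp [Cmat]
      simpa [hν₂def, hc] using ht (Cmat x) (Cmat y)
  have hν₂nn : ∀ x, 0 ≤ ν₂ x := isNormCn_nonneg hν₂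
  have hν₂0 : ν₂ 0 = 0 := (hν₂.1 0).mpr rfl
  have hν₂pos : ∀ x : Fin n → ℂ, x ≠ 0 → 0 < ν₂ x := fun x hx =>
    (hν₂nn x).lt_of_ne (fun h => hx ((hν₂.1 x).mp h.symm))
  -- bound for ν₂ (A *ᵥ x)
  have hbound : ∀ (A : Matrix (Fin n) (Fin n) ℂ) (x : Fin n → ℂ),
      ν₂ (A.mulVec x) ≤ (C * N A * ∑ j, ‖x j‖) * ∑ i, ν₂ (Pi.single i 1) := by
    intro A x
    refine (isNormCn_expand hν₂ _).trans ?_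
    rw [Finset.mul_sum]
    refine Finset.sum_le_sum fun i _ => ?_
    have h2 : ‖(A.mulVec x) i‖ ≤ ∑ j, ‖A i j‖ * ‖x j‖ := by
      have : (A.mulVec x) i = ∑ j, A i j * x j := rfl
      rw [this]
      exact (norm_sum_le _ _).trans (le_of_eq (by simp [norm_mul]))
    have h3 : ∑ j, ‖A i j‖ * ‖x j‖ ≤ C * N A * ∑ j, ‖x j‖ := by
      rw [Finset.mul_sum]
      exact Finset.sum_le_sum fun j _ =>
        mul_le_mul_of_nonneg_right (hC A i j) (norm_nonneg _)
    exact mul_le_mul_of_nonneg_right (h2.trans h3) (hν₂nn _)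
  -- the norm ν₁
  set S₁ : (Fin n → ℂ) → Set ℝ :=
    fun x => {r | ∃ A : Matrix (Fin n) (Fin n) ℂ, N A ≤ 1 ∧ r = ν₂ (A.mulVec x)} with hS₁def
  set ν₁ : (Fin n → ℂ) → ℝ := fun x => sSup (S₁ x) with hν₁def
  have hS₁mem0 : ∀ x, (0:ℝ) ∈ S₁ x := by
    intro x
    exact ⟨0, by rw [hN0]; norm_num, by rw [Matrix.zero_mulVec, hν₂0]⟩
  have hS₁ne : ∀ x, (S₁ x).Nonempty := fun x => ⟨0, hS₁mem0 x⟩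
  have hS₁bdd : ∀ x, BddAbove (S₁ x) := by
    intro x
    refine ⟨(C * 1 * ∑ j, ‖x j‖) * ∑ i, ν₂ (Pi.single i 1), ?_⟩
    rintro r ⟨A, hA1, rfl⟩
    refine (hbound A x).trans ?_
    have hsum1 : (0:ℝ) ≤ ∑ j, ‖x j‖ := Finset.sum_nonneg fun _ _ => norm_nonneg _
    have hsum2 : (0:ℝ) ≤ ∑ i, ν₂ (Pi.single i 1) := Finset.sum_nonneg fun _ _ => hν₂nn _
    have : C * N A ≤ C * 1 := mul_le_mul_of_nonneg_left hA1 hC0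
    exact mul_le_mul_of_nonneg_right
      (mul_le_mul_of_nonneg_right this hsum1) hsum2
  have hmemν₁ : ∀ {A : Matrix (Fin n) (Fin n) ℂ} {x}, N A ≤ 1 → ν₂ (A.mulVec x) ≤ ν₁ x :=
    fun {A x} h => le_csSup (hS₁bdd x) ⟨A, h, rfl⟩
  have hν₁nn : ∀ x, 0 ≤ ν₁ x := fun x => le_csSup (hS₁bdd x) (hS₁mem0 x)
  have hkey : ∀ (A : Matrix (Fin n) (Fin n) ℂ) (x), ν₂ (A.mulVec x) ≤ N A * ν₁ x := by
    intro A x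
    rcases (hNnn A).eq_or_lt with h | h
    · have hA0 : A = 0 := (h0 A).mp h.symm
      subst hA0
      rw [Matrix.zero_mulVec, hν₂0, hN0, zero_mul]
    · set c : ℂ := (((N A)⁻¹ : ℝ) : ℂ) with hc
      have hnc : ‖c‖ = (N A)⁻¹ := by
        rw [hc, Complex.norm_real, Real.norm_eq_abs, abs_of_pos (inv_pos.mpr h)]
      have h1 : N (c • A) ≤ 1 := by
        rw [hs, hnc, inv_mul_cancel₀ (ne_of_gt h)]
      have h2 := hmemν₁ (x := x) h1
      rw [Matrix.smul_mulVec, hν₂.2.1, hnc] at h2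
      calc ν₂ (A.mulVec x) = N A * ((N A)⁻¹ * ν₂ (A.mulVec x)) := by
            field_simp
        _ ≤ N A * ν₁ x := mul_le_mul_of_nonneg_left h2 (le_of_lt h)
  have hν₁0 : ν₁ (0 : Fin n → ℂ) = 0 := by
    refine le_antisymm (csSup_le (hS₁ne 0) ?_) (hν₁nn 0)
    rintro r ⟨A, _, rfl⟩
    rw [Matrix.mulVec_zero, hν₂0]
  have hν₁smul_le : ∀ (c : ℂ) (x), ν₁ (c • x) ≤ ‖c‖ * ν₁ x := by
    intro c x
    refine csSup_le (hS₁ne _) ?_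
    rintro r ⟨A, hA, rfl⟩
    rw [Matrix.mulVec_smul, hν₂.2.1]
    exact mul_le_mul_of_nonneg_left (hmemν₁ hA) (norm_nonneg c)
  have hν₁smul : ∀ (c : ℂ) (x), ν₁ (c • x) = ‖c‖ * ν₁ x := by
    intro c x
    rcases eq_or_ne c 0 with rfl | hc
    · simp [hν₁0]
    · refine le_antisymm (hν₁smul_le c x) ?_
      have := hν₁smul_le c⁻¹ (c • x)
      rw [inv_smul_smul₀ hc, norm_inv] at this
      have hcpos : (0:ℝ) < ‖c‖ := norm_pos_iff.mpr hc
      calc ‖c‖ * ν₁ x ≤ ‖c‖ * (‖c‖⁻¹ * ν₁ (c • x)) :=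
            mul_le_mul_of_nonneg_left this (le_of_lt hcpos)
        _ = ν₁ (c • x) := by
            rw [← mul_assoc, mul_inv_cancel₀ (ne_of_gt hcpos), one_mul]
  have hν₁pos : ∀ x : Fin n → ℂ, x ≠ 0 → 0 < ν₁ x := by
    intro x hx
    obtain ⟨j, hj'⟩ := Function.ne_iff.mp hx
    have hj : x j ≠ 0 := hj'
    set A₀ : Matrix (Fin n) (Fin n) ℂ :=
      Matrix.of (fun i k => if k = j then x i / x j else 0) with hA₀
    have hA₀x : A₀.mulVec x = x := by
      funext i
      have : (A₀.mulVec x) i = ∑ k, (if k = j then x i / x j else 0) * x k := rfl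
      rw [this]
      rw [Finset.sum_eq_single j]
      · rw [if_pos rfl]; exact div_mul_cancel₀ _ hj
      · intro k _ hk; simp [hk]
      · intro hjm; exact absurd (Finset.mem_univ j) hjm
    have hA₀ne : A₀ ≠ 0 := by
      intro h
      apply hx
      rw [← hA₀x, h, Matrix.zero_mulVec]
    have htpos : 0 < N A₀ := (hNnn A₀).lt_of_ne (fun h => hA₀ne ((h0 A₀).mp h.symm))
    set c : ℂ := (((N A₀)⁻¹ : ℝ) : ℂ) with hc
    have hnc : ‖c‖ = (N A₀)⁻¹ := by
      rw [hc, Complex.norm_real, Real.norm_eq_abs, abs_of_pos (inv_pos.mpr htpos)]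
    have h1 : N (c • A₀) ≤ 1 := by
      rw [hs, hnc, inv_mul_cancel₀ (ne_of_gt htpos)]
    have h2 : ν₂ ((c • A₀).mulVec x) ≤ ν₁ x := hmemν₁ h1
    have h3 : ν₂ ((c • A₀).mulVec x) = (N A₀)⁻¹ * ν₂ x := by
      rw [Matrix.smul_mulVec, hA₀x, hν₂.2.1, hnc]
    have h4 : 0 < (N A₀)⁻¹ * ν₂ x :=
      mul_pos (inv_pos.mpr htpos) (hν₂pos x hx)
    linarith [h3 ▸ h2]
  have hν₁ : IsNormCn ν₁ := by
    refine ⟨fun x => ?_, hν₁smul, fun x y => ?_⟩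
    · constructor
      · intro h
        by_contra hx
        exact absurd h (ne_of_gt (hν₁pos x hx))
      · rintro rfl; exact hν₁0
    · refine csSup_le (hS₁ne _) ?_
      rintro r ⟨A, hA, rfl⟩
      rw [Matrix.mulVec_add]
      exact (hν₂.2.2 _ _).trans (add_le_add (hmemν₁ hA) (hmemν₁ hA))
  -- a vector of ν₁-norm one
  have hxunit : ∃ x : Fin n → ℂ, ν₁ x = 1 := by
    have hx0 : (Pi.single i₀ 1 : Fin n → ℂ) ≠ 0 := by
      intro h
      have := congrFun h i₀
      simp at this
    set t := ν₁ (Pi.single i₀ 1 : Fin n → ℂ) with htd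
    have htpos : 0 < t := hν₁pos _ hx0
    refine ⟨((t⁻¹ : ℝ) : ℂ) • (Pi.single i₀ 1 : Fin n → ℂ), ?_⟩
    rw [hν₁smul, Complex.norm_real, Real.norm_eq_abs, abs_of_pos (inv_pos.mpr htpos), ← htd,
      inv_mul_cancel₀ (ne_of_gt htpos)]
  -- the candidate norm N'
  set N' : Matrix (Fin n) (Fin n) ℂ → ℝ := gind ν₁ ν₂ with hN'def
  have hGset : ∀ A, N' A = sSup {r : ℝ | ∃ x : Fin n → ℂ, ν₁ x = 1 ∧ r = ν₂ (A.mulVec x)} :=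
    fun A => rfl
  have hGne : ∀ A : Matrix (Fin n) (Fin n) ℂ,
      {r : ℝ | ∃ x : Fin n → ℂ, ν₁ x = 1 ∧ r = ν₂ (A.mulVec x)}.Nonempty := by
    intro A
    obtain ⟨x, hx⟩ := hxunit
    exact ⟨ν₂ (A.mulVec x), x, hx, rfl⟩
  have hGleN : ∀ A : Matrix (Fin n) (Fin n) ℂ, ∀ r ∈
      {r : ℝ | ∃ x : Fin n → ℂ, ν₁ x = 1 ∧ r = ν₂ (A.mulVec x)}, r ≤ N A := by
    rintro A r ⟨x, hx, rfl⟩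
    have := hkey A x
    rwa [hx, mul_one] at this
  have hGbdd : ∀ A : Matrix (Fin n) (Fin n) ℂ,
      BddAbove {r : ℝ | ∃ x : Fin n → ℂ, ν₁ x = 1 ∧ r = ν₂ (A.mulVec x)} :=
    fun A => ⟨N A, fun r hr => hGleN A r hr⟩
  have hle : ∀ A, N' A ≤ N A := fun A => csSup_le (hGne A) (hGleN A)
  have hmemN' : ∀ {A : Matrix (Fin n) (Fin n) ℂ} {x}, ν₁ x = 1 →
      ν₂ (A.mulVec x) ≤ N' A :=
    fun {A x} hx => le_csSup (hGbdd A) ⟨x, hx, rfl⟩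
  have hN'nn : ∀ A, 0 ≤ N' A := by
    intro A
    obtain ⟨x, hx⟩ := hxunit
    exact (hν₂nn _).trans (hmemN' hx)
  have hN'0 : N' (0 : Matrix (Fin n) (Fin n) ℂ) = 0 := by
    refine le_antisymm (csSup_le (hGne 0) ?_) (hN'nn 0)
    rintro r ⟨x, _, rfl⟩
    rw [Matrix.zero_mulVec, hν₂0]
  have hN'pos : ∀ A : Matrix (Fin n) (Fin n) ℂ, A ≠ 0 → 0 < N' A := by
    intro A hA
    have : ∃ j, A.mulVec (Pi.single j 1) ≠ 0 := by
      by_contra hcon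
      push_neg at hcon
      apply hA
      ext i j
      have := congrFun (hcon j) i
      simpa [Matrix.mulVec_single] using this
    obtain ⟨j, hj⟩ := this
    have hx0 : (Pi.single j 1 : Fin n → ℂ) ≠ 0 := by
      intro h
      apply hj
      rw [h, Matrix.mulVec_zero]
    set t := ν₁ (Pi.single j 1 : Fin n → ℂ) with htd
    have htpos : 0 < t := hν₁pos _ hx0
    set x : Fin n → ℂ := ((t⁻¹ : ℝ) : ℂ) • (Pi.single j 1 : Fin n → ℂ) with hxd
    have hx1 : ν₁ x = 1 := by
      rw [hxd, hν₁smul, Complex.norm_real, Real.norm_eq_abs, abs_of_pos (inv_pos.mpr htpos),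
        ← htd, inv_mul_cancel₀ (ne_of_gt htpos)]
    have hAx : A.mulVec x ≠ 0 := by
      rw [hxd, Matrix.mulVec_smul]
      refine smul_ne_zero ?_ hj
      simpa using ne_of_gt (inv_pos.mpr htpos)
    have : 0 < ν₂ (A.mulVec x) := hν₂pos _ hAx
    exact lt_of_lt_of_le this (hmemN' hx1)
  have hN'smul_le : ∀ (c : ℂ) (A), N' (c • A) ≤ ‖c‖ * N' A := by
    intro c A
    refine csSup_le (hGne _) ?_
    rintro r ⟨x, hx, rfl⟩
    rw [Matrix.smul_mulVec, hν₂.2.1]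
    exact mul_le_mul_of_nonneg_left (hmemN' hx) (norm_nonneg c)
  have hN'smul : ∀ (c : ℂ) (A), N' (c • A) = ‖c‖ * N' A := by
    intro c A
    rcases eq_or_ne c 0 with rfl | hc
    · simp [hN'0]
    · refine le_antisymm (hN'smul_le c A) ?_
      have := hN'smul_le c⁻¹ (c • A)
      rw [inv_smul_smul₀ hc, norm_inv] at this
      have hcpos : (0:ℝ) < ‖c‖ := norm_pos_iff.mpr hc
      calc ‖c‖ * N' A ≤ ‖c‖ * (‖c‖⁻¹ * N' (c • A)) :=
            mul_le_mul_of_nonneg_left this (le_of_lt hcpos)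
        _ = N' (c • A) := by
            rw [← mul_assoc, mul_inv_cancel₀ (ne_of_gt hcpos), one_mul]
  have hN' : IsNormMn N' := by
    refine ⟨fun A => ?_, hN'smul, fun A B => ?_⟩
    · constructor
      · intro h
        by_contra hA
        exact absurd h (ne_of_gt (hN'pos A hA))
      · rintro rfl; exact hN'0
    · refine csSup_le (hGne _) ?_
      rintro r ⟨x, hx, rfl⟩
      rw [Matrix.add_mulVec]
      exact (hν₂.2.2 _ _).trans (add_le_add (hmemN' hx) (hmemN' hx))
  exact ⟨ν₁, ν₂, hν₁, hν₂, fun A => (hmin N' hN' hle A).symm⟩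
end

section
/- Let n ≥ 1 and let ‖·‖₁ and ‖·‖₂ be norms on ℂⁿ. The generalized induced norm ‖A‖_{1,2} = max{‖Ax‖₂ : ‖x‖₁ = 1} is an algebra norm on M_n (i.e., ‖AB‖_{1,2} ≤ ‖A‖_{1,2}‖B‖_{1,2} for all A, B ∈ M_n) if and only if ‖x‖₁ ≤ ‖x‖₂ for all x ∈ ℂⁿ. -/
/-!
If `ν₁ ≤ ν₂`, then `ν₂(ABx) ≤ ‖A‖ ν₁(Bx) ≤ ‖A‖ ν₂(Bx) ≤ ‖A‖ ‖B‖` for `ν₁ x = 1`.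
Conversely, given `y ≠ 0`, Hahn–Banach yields a functional `φ` of `ν₁`-dual norm at most `1` with
`φ y = ν₁ y`. The rank-one matrix `M = y φ` has `‖M‖ ≤ ν₂ y`, while `M² y = ν₁(y)² y`, so
`ν₁(y)² ν₂(y) ≤ ‖M²‖ ν₁(y) ≤ ‖M‖² ν₁(y) ≤ ν₂(y)² ν₁(y)`, i.e. `ν₁ y ≤ ν₂ y`.
-/

open Matrix

namespace IsNormCn

variable {n : ℕ} {ν : (Fin n → ℂ) → ℝ}

lemma map_zero (h : IsNormCn ν) : ν 0 = 0 := (h.1 0).mpr rfl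

lemma map_neg (h : IsNormCn ν) (x : Fin n → ℂ) : ν (-x) = ν x := by
  simpa using h.2.1 (-1) x

lemma nonneg (h : IsNormCn ν) (x : Fin n → ℂ) : 0 ≤ ν x := by
  have := h.2.2 x (-x)
  rw [add_neg_cancel, h.map_zero, h.map_neg] at this
  linarith

lemma pos (h : IsNormCn ν) {x : Fin n → ℂ} (hx : x ≠ 0) : 0 < ν x :=
  (h.nonneg x).lt_of_ne fun e => hx ((h.1 x).mp e.symm)

lemma map_inv_self_smul (h : IsNormCn ν) {x : Fin n → ℂ} (hx : x ≠ 0) :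
    ν ((ν x : ℂ)⁻¹ • x) = 1 := by
  rw [h.2.1, norm_inv, Complex.norm_real, Real.norm_of_nonneg (h.nonneg x),
    inv_mul_cancel₀ (h.pos hx).ne']

end IsNormCn

/-- `ℂⁿ` with the norm `ν`, a type synonym so that its normed structure does not clash with the sup
norm of `Fin n → ℂ`. -/
def NormedCn {n : ℕ} (_ν : (Fin n → ℂ) → ℝ) : Type := Fin n → ℂ

namespace NormedCn

variable {n : ℕ} {ν : (Fin n → ℂ) → ℝ}

instance : AddCommGroup (NormedCn ν) := inferInstanceAs (AddCommGroup (Fin n → ℂ))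

instance : Module ℂ (NormedCn ν) := inferInstanceAs (Module ℂ (Fin n → ℂ))

instance : FiniteDimensional ℂ (NormedCn ν) := inferInstanceAs (FiniteDimensional ℂ (Fin n → ℂ))

instance : Norm (NormedCn ν) := ⟨ν⟩

lemma normedSpaceCore (h : IsNormCn ν) : NormedSpace.Core ℂ (NormedCn ν) where
  norm_nonneg := h.nonneg
  norm_smul := h.2.1
  norm_triangle := h.2.2
  norm_eq_zero_iff := h.1

noncomputable abbrev normedAddCommGroup (h : IsNormCn ν) : NormedAddCommGroup (NormedCn ν) :=
  .ofCore (normedSpaceCore h)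

noncomputable abbrev normedSpace (h : IsNormCn ν) :
    @NormedSpace ℂ (NormedCn ν) _ (normedAddCommGroup h).toSeminormedAddCommGroup :=
  letI := normedAddCommGroup h
  .ofCore (normedSpaceCore h)

end NormedCn

namespace IsNormCn

variable {n : ℕ} {ν ν₁ ν₂ : (Fin n → ℂ) → ℝ}

lemma exists_linearMap_bound (h₁ : IsNormCn ν₁) (h₂ : IsNormCn ν₂)
    (f : (Fin n → ℂ) →ₗ[ℂ] Fin n → ℂ) : ∃ C, ∀ x, ν₂ (f x) ≤ C * ν₁ x := by
  let := NormedCn.normedAddCommGroup h₁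
  let := NormedCn.normedAddCommGroup h₂
  let := NormedCn.normedSpace h₁
  let := NormedCn.normedSpace h₂
  let g : NormedCn ν₁ →ₗ[ℂ] NormedCn ν₂ := f
  exact ⟨‖LinearMap.toContinuousLinearMap g‖, (LinearMap.toContinuousLinearMap g).le_opNorm⟩

lemma exists_norming_functional (h : IsNormCn ν) (y : Fin n → ℂ) :
    ∃ φ : (Fin n → ℂ) →ₗ[ℂ] ℂ, (∀ u, ‖φ u‖ ≤ ν u) ∧ φ y = ν y := by
  let := NormedCn.normedAddCommGroup h
  let := NormedCn.normedSpace h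
  obtain ⟨g, hg, hgy⟩ := exists_dual_vector'' (E := NormedCn ν) ℂ y
  refine ⟨g.toLinearMap, fun (u : NormedCn ν) => ?_, hgy⟩
  calc ‖g u‖ ≤ ‖g‖ * ‖u‖ := g.le_opNorm u
    _ ≤ ‖u‖ := mul_le_of_le_one_left (norm_nonneg _) hg

end IsNormCn

section gind

variable {n : ℕ} {ν₁ ν₂ : (Fin n → ℂ) → ℝ}

lemma gind_nonneg (h₂ : IsNormCn ν₂) (A : Matrix (Fin n) (Fin n) ℂ) : 0 ≤ gind ν₁ ν₂ A :=
  Real.sSup_nonneg <| by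
    rintro r ⟨x, -, rfl⟩
    exact h₂.nonneg _

/-- For `n = 0` the defining set is empty and `gind` is `sSup ∅ = 0`, whence `0 ≤ C`. -/
lemma gind_le {A : Matrix (Fin n) (Fin n) ℂ} {C : ℝ} (hC : 0 ≤ C)
    (h : ∀ x, ν₁ x = 1 → ν₂ (A *ᵥ x) ≤ C) : gind ν₁ ν₂ A ≤ C :=
  Real.sSup_le (by rintro r ⟨x, hx, rfl⟩; exact h x hx) hC

lemma gind_bddAbove (h₁ : IsNormCn ν₁) (h₂ : IsNormCn ν₂) (A : Matrix (Fin n) (Fin n) ℂ) :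
    BddAbove {r : ℝ | ∃ x : Fin n → ℂ, ν₁ x = 1 ∧ r = ν₂ (A *ᵥ x)} := by
  obtain ⟨C, hC⟩ := h₁.exists_linearMap_bound h₂ A.mulVecLin
  refine ⟨C, ?_⟩
  rintro r ⟨x, hx, rfl⟩
  simpa [hx] using hC x

lemma mulVec_le_gind_mul (h₁ : IsNormCn ν₁) (h₂ : IsNormCn ν₂) (A : Matrix (Fin n) (Fin n) ℂ)
    (x : Fin n → ℂ) : ν₂ (A *ᵥ x) ≤ gind ν₁ ν₂ A * ν₁ x := by
  rcases eq_or_ne x 0 with rfl | hx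
  · simp [h₁.map_zero, h₂.map_zero]
  have hunit : ν₂ (A *ᵥ ((ν₁ x : ℂ)⁻¹ • x)) ≤ gind ν₁ ν₂ A :=
    le_csSup (gind_bddAbove h₁ h₂ A) ⟨_, h₁.map_inv_self_smul hx, rfl⟩
  rw [mulVec_smul, h₂.2.1, norm_inv, Complex.norm_real, Real.norm_of_nonneg (h₁.nonneg x),
    inv_mul_le_iff₀ (h₁.pos hx)] at hunit
  linarith

lemma gind_mul_le_of_le (h₁ : IsNormCn ν₁) (h₂ : IsNormCn ν₂) (hle : ∀ x, ν₁ x ≤ ν₂ x)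
    (A B : Matrix (Fin n) (Fin n) ℂ) : gind ν₁ ν₂ (A * B) ≤ gind ν₁ ν₂ A * gind ν₁ ν₂ B := by
  have hA : 0 ≤ gind ν₁ ν₂ A := gind_nonneg h₂ A
  refine gind_le (mul_nonneg hA (gind_nonneg h₂ B)) fun x hx => ?_
  calc ν₂ ((A * B) *ᵥ x) = ν₂ (A *ᵥ (B *ᵥ x)) := by rw [mulVec_mulVec]
    _ ≤ gind ν₁ ν₂ A * ν₁ (B *ᵥ x) := mulVec_le_gind_mul h₁ h₂ A _
    _ ≤ gind ν₁ ν₂ A * ν₂ (B *ᵥ x) := by gcongr; exact hle _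
    _ ≤ gind ν₁ ν₂ A * (gind ν₁ ν₂ B * ν₁ x) := by gcongr; exact mulVec_le_gind_mul h₁ h₂ B x
    _ = gind ν₁ ν₂ A * gind ν₁ ν₂ B := by rw [hx, mul_one]

lemma gind_rankOne_le (h₂ : IsNormCn ν₂) {φ : (Fin n → ℂ) →ₗ[ℂ] ℂ} (hφ : ∀ u, ‖φ u‖ ≤ ν₁ u)
    (y : Fin n → ℂ) : gind ν₁ ν₂ (LinearMap.toMatrix' (φ.smulRight y)) ≤ ν₂ y := by
  refine gind_le (h₂.nonneg y) fun x hx => ?_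
  rw [LinearMap.toMatrix'_mulVec, LinearMap.smulRight_apply, h₂.2.1]
  exact mul_le_of_le_one_left (h₂.nonneg y) (hx ▸ hφ x)

lemma le_of_gind_mul_self_le (h₁ : IsNormCn ν₁) (h₂ : IsNormCn ν₂)
    (hsub : ∀ A, gind ν₁ ν₂ (A * A) ≤ gind ν₁ ν₂ A * gind ν₁ ν₂ A) (y : Fin n → ℂ) :
    ν₁ y ≤ ν₂ y := by
  rcases eq_or_ne y 0 with rfl | hy
  · rw [h₁.map_zero, h₂.map_zero]
  obtain ⟨φ, hφ, hφy⟩ := h₁.exists_norming_functional y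
  set M := LinearMap.toMatrix' (φ.smulRight y)
  have hM : gind ν₁ ν₂ M ≤ ν₂ y := gind_rankOne_le h₂ hφ y
  have hMMy : (M * M) *ᵥ y = (ν₁ y : ℂ) • (ν₁ y : ℂ) • y := by
    simp only [M, ← mulVec_mulVec, LinearMap.toMatrix'_mulVec, LinearMap.smulRight_apply,
      map_smul, hφy]
  have h₁y := h₁.pos hy
  have h₂y := h₂.pos hy
  have key : ν₁ y * (ν₁ y * ν₂ y) ≤ ν₂ y * (ν₁ y * ν₂ y) :=
    calc ν₁ y * (ν₁ y * ν₂ y) = ν₂ ((M * M) *ᵥ y) := by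
          rw [hMMy, h₂.2.1, h₂.2.1, Complex.norm_real, Real.norm_of_nonneg h₁y.le]
      _ ≤ gind ν₁ ν₂ (M * M) * ν₁ y := mulVec_le_gind_mul h₁ h₂ _ y
      _ ≤ gind ν₁ ν₂ M * gind ν₁ ν₂ M * ν₁ y := by gcongr; exact hsub M
      _ ≤ ν₂ y * ν₂ y * ν₁ y := by
          have : 0 ≤ gind ν₁ ν₂ M := gind_nonneg h₂ M
          gcongr
      _ = ν₂ y * (ν₁ y * ν₂ y) := by ring
  exact le_of_mul_le_mul_right key (mul_pos h₁y h₂y)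

end gind

theorem gind_algebra_norm_iff_general (n : ℕ)
    (ν₁ ν₂ : (Fin n → ℂ) → ℝ) (h₁ : IsNormCn ν₁) (h₂ : IsNormCn ν₂) :
    (∀ A B : Matrix (Fin n) (Fin n) ℂ,
        gind ν₁ ν₂ (A * B) ≤ gind ν₁ ν₂ A * gind ν₁ ν₂ B) ↔
      ∀ x : Fin n → ℂ, ν₁ x ≤ ν₂ x :=
  ⟨fun hsub => le_of_gind_mul_self_le h₁ h₂ fun A => hsub A A, gind_mul_le_of_le h₁ h₂⟩

theorem gind_algebra_norm_iff (n : ℕ) (hn : 1 ≤ n)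
    (ν₁ ν₂ : (Fin n → ℂ) → ℝ) (h₁ : IsNormCn ν₁) (h₂ : IsNormCn ν₂) :
    (∀ A B : Matrix (Fin n) (Fin n) ℂ,
        gind ν₁ ν₂ (A * B) ≤ gind ν₁ ν₂ A * gind ν₁ ν₂ B) ↔
      ∀ x : Fin n → ℂ, ν₁ x ≤ ν₂ x :=
  gind_algebra_norm_iff_general n ν₁ ν₂ h₁ h₂
end

section
/- Let n ≥ 1 and let N be a norm on M_n. Define norms on ℂⁿ by ‖x‖₁ = max{N(C_{Ax}) : A ∈ M_n, N(A) = 1} and ‖x‖₂ = N(C_x). Then for every A ∈ M_n and x ∈ ℂⁿ one has ‖Ax‖₂ ≤ N(A)·‖x‖₁; consequently the generalized induced norm satisfies ‖A‖_{1,2} = max{‖Ax‖₂ : ‖x‖₁ = 1} ≤ N(A) for all A ∈ M_n. -/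
/-! Since `C_{Ax} = A C_x`, we have `‖Ax‖₂ = N (R_x A)` with `R_x` right multiplication by `C_x`,
and `‖x‖₁` is the operator norm of `R_x` for `N`, finite because `M_n` is finite-dimensional.
So `‖Ax‖₂ ≤ N(A) ‖x‖₁` is `N (R_x A) ≤ ‖R_x‖ N(A)`, and the bound on the generalized induced
norm follows by taking the supremum over `‖x‖₁ = 1`. -/

open Matrix

section

variable {𝕜 E : Type*} [AddCommGroup E] {N : E → ℝ}

theorem nonneg_of_norm_smul_of_triangle [NormedField 𝕜] [Module 𝕜 E]
    (hsmul : ∀ (c : 𝕜) v, N (c • v) = ‖c‖ * N v) (htri : ∀ v w, N (v + w) ≤ N v + N w)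
    (v : E) : 0 ≤ N v := by
  have hzero : N 0 = 0 := by simpa using hsmul 0 0
  have hneg : N (-v) = N v := by simpa using hsmul (-1) v
  have := htri v (-v)
  rw [add_neg_cancel, hzero, hneg] at this
  linarith

theorem apply_le_mul_sSup_sphere [RCLike 𝕜] [Module 𝕜 E] [FiniteDimensional 𝕜 E]
    (hzero : ∀ v, N v = 0 ↔ v = 0) (hsmul : ∀ (c : 𝕜) v, N (c • v) = ‖c‖ * N v)
    (htri : ∀ v w, N (v + w) ≤ N v + N w) (L : E →ₗ[𝕜] E) (v : E) :
    N (L v) ≤ N v * sSup {r | ∃ w, N w = 1 ∧ r = N (L w)} := by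
  let _ : Norm E := ⟨N⟩
  have core : NormedSpace.Core 𝕜 E :=
    { norm_nonneg := nonneg_of_norm_smul_of_triangle hsmul htri
      norm_smul := hsmul
      norm_triangle := htri
      norm_eq_zero_iff := hzero }
  let _ := NormedAddCommGroup.ofCore core
  let _ := NormedSpace.ofCore core
  let L' := L.toContinuousLinearMap
  have hsup : sSup {r | ∃ w, N w = 1 ∧ r = N (L w)} = ‖L'‖ := by
    rw [← L'.sSup_sphere_eq_norm]
    congr 1
    ext r
    simp only [Set.mem_ofPred_eq, Set.mem_image, mem_sphere_zero_iff_norm, eq_comm (a := r)]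
    rfl
  rw [hsup, mul_comm]
  exact L'.le_opNorm v

end

theorem Cmat_mulVec {n : ℕ} (A : Matrix (Fin n) (Fin n) ℂ) (x : Fin n → ℂ) :
    Cmat (A *ᵥ x) = A * Cmat x := by
  ext i k
  simp [Cmat, mul_apply, mulVec, dotProduct]

theorem gind_le_of_minimal_construction_general (n : ℕ)
    (N : Matrix (Fin n) (Fin n) ℂ → ℝ) (hN : IsNormMn N)
    (ν₁ ν₂ : (Fin n → ℂ) → ℝ)
    (hν₁ : ∀ x, ν₁ x = sSup {r : ℝ | ∃ A : Matrix (Fin n) (Fin n) ℂ,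
        N A = 1 ∧ r = N (Cmat (A.mulVec x))})
    (hν₂ : ∀ x, ν₂ x = N (Cmat x)) :
    (∀ (A : Matrix (Fin n) (Fin n) ℂ) (x : Fin n → ℂ),
        ν₂ (A.mulVec x) ≤ N A * ν₁ x) ∧
      ∀ A : Matrix (Fin n) (Fin n) ℂ, gind ν₁ ν₂ A ≤ N A := by
  obtain ⟨hzero, hsmul, htri⟩ := hN
  have hmulVec : ∀ A x, ν₂ (A *ᵥ x) ≤ N A * ν₁ x := by
    intro A x
    simp only [hν₂, hν₁, Cmat_mulVec]
    exact apply_le_mul_sSup_sphere hzero hsmul htri (LinearMap.mulRight ℂ (Cmat x)) A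
  refine ⟨hmulVec, fun A => Real.sSup_le ?_ (nonneg_of_norm_smul_of_triangle hsmul htri A)⟩
  rintro _ ⟨x, hx, rfl⟩
  simpa [hx] using hmulVec A x

theorem gind_le_of_minimal_construction (n : ℕ) (hn : 1 ≤ n)
    (N : Matrix (Fin n) (Fin n) ℂ → ℝ) (hN : IsNormMn N)
    (ν₁ ν₂ : (Fin n → ℂ) → ℝ)
    (hν₁ : ∀ x, ν₁ x = sSup {r : ℝ | ∃ A : Matrix (Fin n) (Fin n) ℂ,
        N A = 1 ∧ r = N (Cmat (A.mulVec x))})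
    (hν₂ : ∀ x, ν₂ x = N (Cmat x)) :
    (∀ (A : Matrix (Fin n) (Fin n) ℂ) (x : Fin n → ℂ),
        ν₂ (A.mulVec x) ≤ N A * ν₁ x) ∧
      ∀ A : Matrix (Fin n) (Fin n) ℂ, gind ν₁ ν₂ A ≤ N A :=
  gind_le_of_minimal_construction_general n N hN ν₁ ν₂ hν₁ hν₂
end

section
/- Let n ≥ 2. Define norms on M_n by ‖A‖_{γ,β} = max{2·ℓ₂(Ax) : ℓ₂(x) = 1} and ‖A‖_{α,β} = max{2·ℓ₂(Ax) : ℓ_∞(x) = 1}. Then ‖A‖_{γ,β} ≤ ‖A‖_{α,β} for every A ∈ M_n, but there exists A ∈ M_n with ‖A‖_{γ,β} < ‖A‖_{α,β}. In particular, the generalized induced norm ‖·‖_{α,β} is not a minimal norm on M_n. -/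
open Matrix

/-!
Both generalized induced norms are twice an operator norm into `ℓ₂`: from `ℓ₂` for `‖·‖_{γ,β}`
and from `ℓ_∞` for `‖·‖_{α,β}`; as `‖x‖_∞ ≤ ‖x‖₂`, the latter dominates.
For `C_x : y ↦ (∑ j, y j) • x`, Cauchy–Schwarz gives `‖C_x‖_{2→2} ≤ √n ‖x‖₂`, whereas the
all-ones vector gives `‖C_x‖_{∞→2} ≥ n ‖x‖₂`, which is strictly larger once `n ≥ 2` and `x ≠ 0`.
So twice the spectral norm is a norm dominated by `‖·‖_{α,β}` and different from it.
-/

open scoped Matrix.Norms.L2Operator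
open WithLp

lemma EuclideanSpace.norm_sum_le_sqrt_card_mul_norm {ι : Type*} [Fintype ι]
    (y : EuclideanSpace ℂ ι) :
    ‖∑ i, y i‖ ≤ √(Fintype.card ι) * ‖y‖ := by
  have h1 : ‖(toLp 2 (1 : ι → ℂ) : EuclideanSpace ℂ ι)‖ = √(Fintype.card ι) := by
    simp [EuclideanSpace.norm_eq]
  calc ‖∑ i, y i‖ = ‖inner ℂ (toLp 2 (1 : ι → ℂ) : EuclideanSpace ℂ ι) y‖ := by
        simp [PiLp.inner_apply]
    _ ≤ _ := h1 ▸ norm_inner_le_norm _ _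

namespace Matrix

variable {n : ℕ}

/-- `A` acting from `ℓ_∞` (the sup norm of `Fin n → ℂ`) to `ℓ₂`. -/
noncomputable def toSupEuclideanCLM (A : Matrix (Fin n) (Fin n) ℂ) :
    (Fin n → ℂ) →L[ℂ] EuclideanSpace ℂ (Fin n) :=
  toEuclideanCLM (𝕜 := ℂ) A ∘L (EuclideanSpace.equiv (Fin n) ℂ).symm.toContinuousLinearMap

@[simp]
lemma toSupEuclideanCLM_apply (A : Matrix (Fin n) (Fin n) ℂ) (x : Fin n → ℂ) :
    toSupEuclideanCLM A x = toLp 2 (A *ᵥ x) := rfl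

lemma norm_le_norm_toSupEuclideanCLM (A : Matrix (Fin n) (Fin n) ℂ) :
    ‖A‖ ≤ ‖toSupEuclideanCLM A‖ := by
  refine ContinuousLinearMap.opNorm_le_bound _ (norm_nonneg _) fun x => ?_
  have hsup : ‖ofLp x‖ ≤ ‖x‖ :=
    (pi_norm_le_iff_of_nonneg (norm_nonneg x)).2 (PiLp.norm_apply_le x)
  calc ‖toEuclideanCLM (𝕜 := ℂ) A x‖ = ‖toSupEuclideanCLM A (ofLp x)‖ := rfl
    _ ≤ ‖toSupEuclideanCLM A‖ * ‖ofLp x‖ := (toSupEuclideanCLM A).le_opNorm _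
    _ ≤ ‖toSupEuclideanCLM A‖ * ‖x‖ := by gcongr

lemma Cmat_mulVec (x y : Fin n → ℂ) : Cmat x *ᵥ y = (∑ j, y j) • x := by
  ext i
  simp only [Cmat, mulVec, dotProduct, of_apply, Pi.smul_apply, smul_eq_mul, Finset.sum_mul]
  exact Finset.sum_congr rfl fun _ _ => mul_comm _ _

lemma norm_Cmat_le (x : Fin n → ℂ) : ‖Cmat x‖ ≤ √n * ‖toLp 2 x‖ := by
  refine ContinuousLinearMap.opNorm_le_bound _ (by positivity) fun y => ?_
  calc ‖toEuclideanCLM (𝕜 := ℂ) (Cmat x) y‖ = ‖∑ j, y j‖ * ‖toLp 2 x‖ := by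
        rw [← norm_smul, ← WithLp.toLp_smul, ← Cmat_mulVec]; rfl
    _ ≤ √n * ‖y‖ * ‖toLp 2 x‖ := by
        gcongr
        simpa using EuclideanSpace.norm_sum_le_sqrt_card_mul_norm y
    _ = _ := by ring

lemma le_norm_toSupEuclideanCLM_Cmat [NeZero n] (x : Fin n → ℂ) :
    n * ‖toLp 2 x‖ ≤ ‖toSupEuclideanCLM (Cmat x)‖ := by
  simpa [Cmat_mulVec, norm_smul] using (toSupEuclideanCLM (Cmat x)).le_opNorm 1

lemma norm_lt_norm_toSupEuclideanCLM_Cmat (hn : 2 ≤ n) {x : Fin n → ℂ} (hx : x ≠ 0) :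
    ‖Cmat x‖ < ‖toSupEuclideanCLM (Cmat x)‖ := by
  have : NeZero n := ⟨by omega⟩
  have hsqrt : √n < n := by
    rw [Real.sqrt_lt' (by positivity)]
    have : (2 : ℝ) ≤ n := by exact_mod_cast hn
    nlinarith
  have hx' : 0 < ‖toLp 2 x‖ := by simpa using hx
  calc ‖Cmat x‖ ≤ √n * ‖toLp 2 x‖ := norm_Cmat_le x
    _ < n * ‖toLp 2 x‖ := by gcongr
    _ ≤ _ := le_norm_toSupEuclideanCLM_Cmat x

end Matrix

lemma gind_eq_two_mul_opNorm {n : ℕ} {E : Type*} [NormedAddCommGroup E] [NormedSpace ℂ E]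
    [Nontrivial E] (e : E ≃ (Fin n → ℂ)) {ν : (Fin n → ℂ) → ℝ} (hν : ∀ x, ν (e x) = ‖x‖)
    (A : Matrix (Fin n) (Fin n) ℂ) (f : E →L[ℂ] EuclideanSpace ℂ (Fin n))
    (hf : ∀ x, f x = toLp 2 (A *ᵥ e x)) :
    gind ν (fun y => 2 * √(∑ i, ‖y i‖ ^ 2)) A = 2 * ‖f‖ := by
  have hset : {r : ℝ | ∃ x, ν x = 1 ∧ r = 2 * √(∑ i, ‖(A *ᵥ x) i‖ ^ 2)} =
      (fun x => ‖((2 : ℂ) • f) x‖) '' Metric.sphere 0 1 := by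
    ext r
    simp only [Set.mem_ofPred_eq, Set.mem_image, mem_sphere_zero_iff_norm,
      _root_.smul_apply, norm_smul, hf, EuclideanSpace.norm_eq]
    constructor
    · rintro ⟨x, hx, rfl⟩
      exact ⟨e.symm x, by rw [← hν, e.apply_symm_apply, hx], by simp⟩
    · rintro ⟨x, hx, rfl⟩
      exact ⟨e x, by rw [hν, hx], by simp⟩
  rw [gind, hset, ContinuousLinearMap.sSup_sphere_eq_norm, norm_smul]
  norm_num

lemma gind_euclidean_eq {n : ℕ} [NeZero n] (A : Matrix (Fin n) (Fin n) ℂ) :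
    gind (fun x => √(∑ i, ‖x i‖ ^ 2)) (fun x => 2 * √(∑ i, ‖x i‖ ^ 2)) A = 2 * ‖A‖ :=
  gind_eq_two_mul_opNorm (WithLp.equiv 2 _) (fun x => (EuclideanSpace.norm_eq x).symm) A
    (toEuclideanCLM (𝕜 := ℂ) A) fun _ => rfl

lemma gind_sup_eq {n : ℕ} [NeZero n] (A : Matrix (Fin n) (Fin n) ℂ) :
    gind (fun x => ⨆ i, ‖x i‖) (fun x => 2 * √(∑ i, ‖x i‖ ^ 2)) A =
      2 * ‖A.toSupEuclideanCLM‖ :=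
  gind_eq_two_mul_opNorm (Equiv.refl _)
    (fun x => by simp [← PiLp.norm_toLp, PiLp.norm_eq_ciSup]) A A.toSupEuclideanCLM fun _ => rfl

lemma isNormMn_const_mul_norm {n : ℕ} {c : ℝ} (hc : 0 < c) :
    IsNormMn (fun A : Matrix (Fin n) (Fin n) ℂ => c * ‖A‖) := by
  refine ⟨fun A => by simp [hc.ne'], fun a A => by simp only [norm_smul]; ring,
    fun A B => by nlinarith [norm_add_le A B]⟩

theorem gind_not_minimal_example (n : ℕ) (hn : 2 ≤ n) :
    (∀ A : Matrix (Fin n) (Fin n) ℂ,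
        gind (fun x => Real.sqrt (∑ i, ‖x i‖ ^ 2))
          (fun x => 2 * Real.sqrt (∑ i, ‖x i‖ ^ 2)) A ≤
        gind (fun x => ⨆ i, ‖x i‖)
          (fun x => 2 * Real.sqrt (∑ i, ‖x i‖ ^ 2)) A) ∧
    (∃ A : Matrix (Fin n) (Fin n) ℂ,
        gind (fun x => Real.sqrt (∑ i, ‖x i‖ ^ 2))
          (fun x => 2 * Real.sqrt (∑ i, ‖x i‖ ^ 2)) A <
        gind (fun x => ⨆ i, ‖x i‖)
          (fun x => 2 * Real.sqrt (∑ i, ‖x i‖ ^ 2)) A) ∧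
    ¬ IsMinimalNorm (gind (fun x : Fin n → ℂ => ⨆ i, ‖x i‖)
        (fun x => 2 * Real.sqrt (∑ i, ‖x i‖ ^ 2))) := by
  have : NeZero n := ⟨by omega⟩
  have hle : ∀ A : Matrix (Fin n) (Fin n) ℂ,
      gind (fun x => √(∑ i, ‖x i‖ ^ 2)) (fun x => 2 * √(∑ i, ‖x i‖ ^ 2)) A ≤
        gind (fun x => ⨆ i, ‖x i‖) (fun x => 2 * √(∑ i, ‖x i‖ ^ 2)) A := fun A => by
    rw [gind_euclidean_eq, gind_sup_eq]
    gcongr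
    exact A.norm_le_norm_toSupEuclideanCLM
  have hlt := Matrix.norm_lt_norm_toSupEuclideanCLM_Cmat hn (one_ne_zero (α := Fin n → ℂ))
  refine ⟨hle, ⟨Cmat 1, ?_⟩, fun hmin => ?_⟩
  · rw [gind_euclidean_eq, gind_sup_eq]
    gcongr
  · have heq := hmin _ (isNormMn_const_mul_norm two_pos)
      (fun A => (gind_euclidean_eq A).ge.trans (hle A)) (Cmat 1)
    rw [gind_sup_eq] at heq
    linarith
end
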